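/- In ℝ³, let E₁ be the union of the four sets E₁₁ = {(c+1, −√3·c − 1/√3, s + 4√3·c − (8c+4)/√3) : c ∈ ℝ, s ≤ 1}, E₁₂ = {(c/√3 + 1, c − 1/√3, s − 8c/3 − 4/√3) : c ∈ ℝ, s ≥ 1}, E₁₃ = {(ad/√3 + 1, d − 1/√3, 1 − 2d − 2ad/3 − 4/√3) : a ∈ [−1,1], d ≥ 0}, and E₁₄ = {(ad/√3 + 1, d − 1/√3, 1 − 2d − 2ad/3 − 4/√3) : a ∈ [−1,1], d ≤ 0}. For k ∈ ℤ define A_k : ℝ³ → ℝ³ by A_k(x,y,t) = (x − 2k, y, t + 4ky + 8k/√3). Then for every nonzero integer k, the sets E₁ and A_k(E₁) are disjoint. -/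

import Mathlib

/-- The half-plane E₁₁ in the Heisenberg group ℝ³. -/
noncomputable def E₁₁ : Set (ℝ × ℝ × ℝ) :=
  {p | ∃ c s : ℝ, s ≤ 1 ∧
    p = (c + 1, -Real.sqrt 3 * c - 1 / Real.sqrt 3,
         s + 4 * Real.sqrt 3 * c - (8 * c + 4) / Real.sqrt 3)}

/-- The half-plane E₁₂ in the Heisenberg group ℝ³. -/
noncomputable def E₁₂ : Set (ℝ × ℝ × ℝ) :=
  {p | ∃ c s : ℝ, 1 ≤ s ∧
    p = (c / Real.sqrt 3 + 1, c - 1 / Real.sqrt 3, s - 8 * c / 3 - 4 / Real.sqrt 3)}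

/-- The infinite sector E₁₃ in the Heisenberg group ℝ³. -/
noncomputable def E₁₃ : Set (ℝ × ℝ × ℝ) :=
  {p | ∃ a d : ℝ, a ∈ Set.Icc (-1 : ℝ) 1 ∧ 0 ≤ d ∧
    p = (a * d / Real.sqrt 3 + 1, d - 1 / Real.sqrt 3,
         1 - 2 * d - 2 * a * d / 3 - 4 / Real.sqrt 3)}

/-- The infinite sector E₁₄ in the Heisenberg group ℝ³. -/
noncomputable def E₁₄ : Set (ℝ × ℝ × ℝ) :=
  {p | ∃ a d : ℝ, a ∈ Set.Icc (-1 : ℝ) 1 ∧ d ≤ 0 ∧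
    p = (a * d / Real.sqrt 3 + 1, d - 1 / Real.sqrt 3,
         1 - 2 * d - 2 * a * d / 3 - 4 / Real.sqrt 3)}

/-- The piecewise linear plane E₁. -/
noncomputable def E₁ : Set (ℝ × ℝ × ℝ) := E₁₁ ∪ E₁₂ ∪ E₁₃ ∪ E₁₄

/-- The Heisenberg action of Aᵏ on ℝ³ ≅ ℂ × ℝ. -/
noncomputable def Ak (k : ℤ) : ℝ × ℝ × ℝ → ℝ × ℝ × ℝ :=
  fun p => (p.1 - 2 * k, p.2.1, p.2.2 + 4 * k * p.2.1 + 8 * k / Real.sqrt 3)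

/-!
In the coordinates `φ = √3 (x - 1)`, `u = y + 1/√3` and the offset `g` from the plane of the
sectors E₁₃, E₁₄, every point of E₁ lies in the double cone `φ² ≤ u²`, on the half-plane `φ = -u`
if `g < 0`, and on the half-plane `φ = u` if `g > 0`. The translation `A_k` fixes `u`, decreases `φ`
by `2√3 k` and increases `g` by `4 k u`, so for `q` and `A_k q` the jump in `g` has the sign of the
drop in `φ` times `u`. Then the point lower in `g` lies on `φ = -u` or the higher one on `φ = u`,
and either way the other point falls strictly outside the cone.
-/

open Real

/-- The constraints that membership in E₁ imposes in the coordinates `(φ, u, g)` of the header. -/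
def InProfile (φ u g : ℝ) : Prop :=
  φ ^ 2 ≤ u ^ 2 ∧ (g < 0 → φ = -u) ∧ (0 < g → φ = u)

namespace InProfile

variable {φ φ' u g g' b : ℝ}

lemma of_nonpos (hg : g ≤ 0) (hφ : φ = -u) : InProfile φ u g :=
  ⟨by rw [hφ, neg_sq], fun _ => hφ, fun h => absurd h hg.not_gt⟩

lemma of_nonneg (hg : 0 ≤ g) (hφ : φ = u) : InProfile φ u g :=
  ⟨by rw [hφ], fun h => absurd h hg.not_gt, fun _ => hφ⟩

lemma of_sq_le (h : φ ^ 2 ≤ u ^ 2) : InProfile φ u 0 :=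
  ⟨h, fun h => absurd h (lt_irrefl 0), fun h => absurd h (lt_irrefl 0)⟩

lemma false_of_lt (h : InProfile φ u g) (h' : InProfile φ' u g')
    (hφ : 0 < (φ - φ') * u) (hg : g < g') : False := by
  rcases lt_or_ge g 0 with hg0 | hg0
  · have hφu : φ = -u := h.2.1 hg0
    subst hφu
    nlinarith [h'.1, sq_nonneg (φ' + u)]
  · have hφu : φ' = u := h'.2.2 (hg0.trans_lt hg)
    subst hφu
    nlinarith [h.1, sq_nonneg (φ - φ')]

lemma false_of_shear (h : InProfile φ u g) (h' : InProfile φ' u g')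
    (hb : 0 < (φ - φ') * b) (hg : g' = g + b * u) : False := by
  rcases lt_trichotomy ((φ - φ') * u) 0 with hu | hu | hu
  · have hbu : b * u < 0 := by nlinarith [mul_neg_of_pos_of_neg hb hu, sq_nonneg (φ - φ')]
    exact h'.false_of_lt h (by linarith) (by linarith)
  · have hφ : φ - φ' ≠ 0 := fun h0 => by simp [h0] at hb
    have hu0 : u = 0 := (mul_eq_zero.1 hu).resolve_left hφ
    have hφ0 : φ = 0 := by simpa [hu0] using h.1
    have hφ'0 : φ' = 0 := by simpa [hu0] using h'.1
    exact hφ (by rw [hφ0, hφ'0, sub_zero])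
  · have hbu : 0 < b * u := by nlinarith [mul_pos hb hu, sq_nonneg (φ - φ')]
    exact h.false_of_lt h' hu (by linarith)

end InProfile

noncomputable def apexDx (p : ℝ × ℝ × ℝ) : ℝ := √3 * (p.1 - 1)

noncomputable def apexDy (p : ℝ × ℝ × ℝ) : ℝ := p.2.1 + 1 / √3

noncomputable def planeOffset (p : ℝ × ℝ × ℝ) : ℝ :=
  p.2.2 - 1 + 2 * p.2.1 + 2 * p.1 / √3 + 4 / √3

lemma apexDx_Ak (k : ℤ) (p : ℝ × ℝ × ℝ) : apexDx (Ak k p) = apexDx p - 2 * √3 * k := by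
  simp only [apexDx, Ak]
  ring

lemma apexDy_Ak (k : ℤ) (p : ℝ × ℝ × ℝ) : apexDy (Ak k p) = apexDy p := rfl

lemma planeOffset_Ak (k : ℤ) (p : ℝ × ℝ × ℝ) :
    planeOffset (Ak k p) = planeOffset p + 4 * k * apexDy p := by
  simp only [planeOffset, apexDy, Ak]
  ring

lemma inProfile_of_mem_E₁ {p : ℝ × ℝ × ℝ} (hp : p ∈ E₁) :
    InProfile (apexDx p) (apexDy p) (planeOffset p) := by
  have h3 : √3 ^ 2 = 3 := sq_sqrt (by norm_num)
  rcases hp with ((⟨c, s, hs, rfl⟩ | ⟨c, s, hs, rfl⟩) | ⟨a, d, ⟨ha₁, ha₂⟩, -, rfl⟩) |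
      ⟨a, d, ⟨ha₁, ha₂⟩, -, rfl⟩
  · have hg :
        planeOffset (c + 1, -√3 * c - 1 / √3, s + 4 * √3 * c - (8 * c + 4) / √3) = s - 1 := by
      simp only [planeOffset]
      field_simp
      linear_combination (2 * c) * h3
    refine InProfile.of_nonpos (by linarith) ?_
    simp only [apexDx, apexDy]
    ring
  · have hg : planeOffset (c / √3 + 1, c - 1 / √3, s - 8 * c / 3 - 4 / √3) = s - 1 := by
      simp only [planeOffset]
      field_simp
      linear_combination (-2 * c) * h3
    refine InProfile.of_nonneg (by linarith) ?_
    simp only [apexDx, apexDy]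
    field_simp
    ring
  all_goals
    have hg :
        planeOffset (a * d / √3 + 1, d - 1 / √3, 1 - 2 * d - 2 * a * d / 3 - 4 / √3) = 0 := by
      simp only [planeOffset]
      field_simp
      linear_combination (-2 * a * d) * h3
    rw [hg]
    refine InProfile.of_sq_le ?_
    simp only [apexDx, apexDy]
    field_simp
    have ha : 0 ≤ (1 - a) * (1 + a) := mul_nonneg (by linarith) (by linarith)
    nlinarith [mul_nonneg ha (sq_nonneg d)]

theorem E₁_disjoint_from_translates (k : ℤ) (hk : k ≠ 0) :
    Disjoint E₁ (Ak k '' E₁) := by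
  rw [Set.disjoint_left]
  rintro _ hp ⟨q, hq, rfl⟩
  have hAq := inProfile_of_mem_E₁ hp
  rw [apexDy_Ak] at hAq
  refine (inProfile_of_mem_E₁ hq).false_of_shear hAq (b := 4 * k) ?_ (planeOffset_Ak k q)
  rw [apexDx_Ak, sub_sub_cancel, show 2 * √3 * k * (4 * k) = 8 * √3 * (k : ℝ) ^ 2 by ring]
  positivity
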